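/- arXiv:2512.05261 — 2 statements merged into one kernel-verified Lean document; each statement's English description precedes it below -/
import Mathlib

section
/- Let α > c ≥ 0, β > 0, 0 < θ < 2β, θ > φ ≥ 0, and R = 0. Then the incumbent's maximal accommodation profit max over the accommodation region {X > 0 : π_E*(X) > 0} of Π₁(X) = (α - c - βX)X equals (α - c)²/(4β), the same as the maximal deterrence profit; i.e. Δ(0) = Π_D*(0) − Π_A*(0) = 0. -/
/-- With `R = 0`, the incumbent's maximal accommodation profit (first-period profit over
the accommodation region `{X > 0 : π_E*(X) > 0}`) equals `(α-c)²/(4β)`, the same as the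
maximal deterrence profit; hence `Δ(0) = Π_D*(0) − Π_A*(0) = 0`. -/
theorem stmt_8 (α c β θ φ : ℝ) (hc : 0 ≤ c) (hαc : c < α) (hβ : 0 < β)
    (hθ : 0 < θ) (hθβ : θ < 2 * β) (hφ : 0 ≤ φ) (hθφ : φ < θ) :
    (let πE : ℝ → ℝ := fun X =>
       if X < (α - c) / (2 * θ - φ) then (θ - φ) * X * (α - c - θ * X) / β
       else (α - c - φ * X) ^ 2 / (4 * β)
     let Pi1 : ℝ → ℝ := fun X => (α - c - β * X) * X
     let PiM : ℝ → ℝ := fun X => Pi1 X + (α - c - θ * X) ^ 2 / (4 * β)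
     IsGreatest (Pi1 '' {X | 0 < X ∧ 0 < πE X}) ((α - c) ^ 2 / (4 * β)) ∧
     IsGreatest (PiM '' {X | 0 ≤ X ∧ πE X ≤ 0}) ((α - c) ^ 2 / (4 * β))) := by
  have ha : 0 < α - c := sub_pos.mpr hαc
  have h2θφ : 0 < 2 * θ - φ := by linarith
  dsimp only
  constructor
  · -- accommodation
    constructor
    · refine ⟨(α - c) / (2 * β), ⟨by positivity, ?_⟩, by field_simp; ring⟩
      split
      · have h1 : 0 < α - c - θ * ((α - c) / (2 * β)) := by
          rw [sub_pos, ← mul_div_assoc, mul_comm, div_lt_iff₀ (by linarith : (0:ℝ) < 2 * β)]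
          nlinarith
        have h2 : 0 < (α - c) / (2 * β) := by positivity
        have h3 : 0 < θ - φ := by linarith
        positivity
      · have h1 : 0 < α - c - φ * ((α - c) / (2 * β)) := by
          rw [sub_pos, ← mul_div_assoc, mul_comm, div_lt_iff₀ (by linarith : (0:ℝ) < 2 * β)]
          nlinarith
        positivity
    · rintro y ⟨X, ⟨hX, _⟩, rfl⟩
      show (α - c - β * X) * X ≤ (α - c) ^ 2 / (4 * β)
      rw [le_div_iff₀ (by positivity : (0:ℝ) < 4 * β)]
      nlinarith [sq_nonneg (α - c - 2 * β * X)]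
  · -- deterrence
    constructor
    · refine ⟨0, ⟨le_refl 0, ?_⟩, by ring⟩
      rw [if_pos (by positivity)]
      simp
    · rintro y ⟨X, ⟨hX0, hπ⟩, rfl⟩
      show (α - c - β * X) * X + (α - c - θ * X) ^ 2 / (4 * β) ≤ (α - c) ^ 2 / (4 * β)
      split at hπ
      · rename_i hlt
        rw [lt_div_iff₀ h2θφ] at hlt
        have h1 : 0 < α - c - θ * X := by nlinarith
        have h3 : 0 < θ - φ := by linarith
        have h2 : X ≤ 0 := by
          by_contra h
          push_neg at h
          have : 0 < (θ - φ) * X * (α - c - θ * X) / β := by positivity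
          linarith
        have hX : X = 0 := le_antisymm h2 hX0
        subst hX
        simp
      · have h1 : (α - c - φ * X) ^ 2 ≤ 0 := by
          by_contra h
          push_neg at h
          have : 0 < (α - c - φ * X) ^ 2 / (4 * β) := by positivity
          linarith
        have h2 : α - c - φ * X = 0 := by nlinarith [sq_nonneg (α - c - φ * X)]
        have hφX : φ * X = α - c := by linarith
        have hXpos : 0 < X := by
          rcases lt_or_eq_of_le hX0 with h | h
          · exact h
          · exfalso; rw [← h] at hφX; simp at hφX; linarith
        rw [show (α - c - β * X) * X + (α - c - θ * X) ^ 2 / (4 * β)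
            = ((α - c - β * X) * X * (4 * β) + (α - c - θ * X) ^ 2) / (4 * β) from by
          field_simp]
        rw [div_le_div_iff₀ (by positivity : (0:ℝ) < 4 * β) (by positivity : (0:ℝ) < 4 * β)]
        rw [← hφX]
        have h5 : 0 < 2 * β - θ := by linarith
        have h6 : 0 < 2 * β + θ - 2 * φ := by linarith
        nlinarith [mul_pos (mul_pos (mul_pos h5 h6) (mul_pos hXpos hXpos)) hβ]
end

section
/- Let α > c ≥ 0, β > 0, 0 < θ < 2β, θ > φ ≥ 0. For every R > 0 with R ≤ ((θ-φ)/θ)(α-c)²/(4β), the incumbent's maximal deterrence profit Π_D*(R) = max{Π^M(X) : π_E*(X) ≤ R} strictly exceeds the maximal accommodation profit Π_A*(R) = sup{(α - c - βX)X : π_E*(X) > R}. -/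
/-- For every positive entry cost `R` (not exceeding the entrant's maximal profit), the
incumbent's maximal deterrence profit strictly exceeds its maximal accommodation profit. -/
theorem stmt_10 (α c β θ φ R : ℝ) (hc : 0 ≤ c) (hαc : c < α) (hβ : 0 < β)
    (hθ : 0 < θ) (hθβ : θ < 2 * β) (hφ : 0 ≤ φ) (hθφ : φ < θ)
    (hR : 0 < R) (hRmax : R ≤ (θ - φ) / θ * (α - c) ^ 2 / (4 * β)) :
    (let πE : ℝ → ℝ := fun X =>
       if X < (α - c) / (2 * θ - φ) then (θ - φ) * X * (α - c - θ * X) / β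
       else (α - c - φ * X) ^ 2 / (4 * β)
     let PiM : ℝ → ℝ := fun X => (α - c - β * X) * X + (α - c - θ * X) ^ 2 / (4 * β)
     let Pi1 : ℝ → ℝ := fun X => (α - c - β * X) * X
     ∀ PD PA : ℝ, IsGreatest (PiM '' {X | 0 ≤ X ∧ πE X ≤ R}) PD →
       IsLUB (Pi1 '' {X | 0 < X ∧ R < πE X}) PA → PA < PD) := by
  intro πE PiM Pi1 PD PA hPD hPA
  have ha : 0 < α - c := sub_pos.mpr hαc
  have hθφ' : 0 < θ - φ := sub_pos.mpr hθφ
  have h2θφ : 0 < 2 * θ - φ := by linarith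
  have h2βθ : 0 < 2 * β - θ := by linarith
  set ε : ℝ := min (min (R * β / ((θ - φ) * (α - c))) ((α - c) * (2 * β - θ) / (4 * β ^ 2)))
      ((α - c) / (2 * (2 * θ - φ))) with hεdef
  have hε0 : 0 < ε := by
    apply lt_min (lt_min _ _) <;> positivity
  have hε1 : ε ≤ R * β / ((θ - φ) * (α - c)) := le_trans (min_le_left _ _) (min_le_left _ _)
  have hε2 : ε ≤ (α - c) * (2 * β - θ) / (4 * β ^ 2) :=
    le_trans (min_le_left _ _) (min_le_right _ _)
  have hε3 : ε ≤ (α - c) / (2 * (2 * θ - φ)) := min_le_right _ _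
  have hεlt : ε < (α - c) / (2 * θ - φ) := by
    calc ε ≤ (α - c) / (2 * (2 * θ - φ)) := hε3
    _ < (α - c) / (2 * θ - φ) := by
        apply div_lt_div_of_pos_left ha h2θφ; linarith
  -- ε is in the deterrence set
  have hπEε : πE ε ≤ R := by
    show (if ε < (α - c) / (2 * θ - φ) then (θ - φ) * ε * (α - c - θ * ε) / β
       else (α - c - φ * ε) ^ 2 / (4 * β)) ≤ R
    rw [if_pos hεlt]
    rw [div_le_iff₀ hβ]
    have h1 : (θ - φ) * (α - c) * ε ≤ R * β := by
      have := (le_div_iff₀ (by positivity : (0:ℝ) < (θ - φ) * (α - c))).mp hε1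
      linarith [this]
    nlinarith [mul_pos hθφ' hε0, mul_nonneg (mul_pos hθφ' hε0).le (mul_nonneg hθ.le hε0.le)]
  have hmem : ε ∈ {X : ℝ | 0 ≤ X ∧ πE X ≤ R} := ⟨hε0.le, hπEε⟩
  have hPDge : PiM ε ≤ PD := hPD.2 ⟨ε, hmem, rfl⟩
  have hPAle : PA ≤ (α - c) ^ 2 / (4 * β) := by
    apply hPA.2
    rintro y ⟨X, _, rfl⟩
    show (α - c - β * X) * X ≤ (α - c) ^ 2 / (4 * β)
    rw [le_div_iff₀ (by positivity)]
    nlinarith [sq_nonneg (α - c - 2 * β * X)]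
  have hkey : (α - c) ^ 2 / (4 * β) < PiM ε := by
    show (α - c) ^ 2 / (4 * β) < (α - c - β * ε) * ε + (α - c - θ * ε) ^ 2 / (4 * β)
    have h2 : 4 * β ^ 2 * ε ≤ (α - c) * (2 * β - θ) := by
      have := (le_div_iff₀ (by positivity : (0:ℝ) < 4 * β ^ 2)).mp hε2
      linarith
    have hnum : 0 < 4 * β * ((α - c - β * ε) * ε) + (α - c - θ * ε) ^ 2 - (α - c) ^ 2 := by
      nlinarith [mul_pos hθ (mul_pos hθ hε0), sq_nonneg θ, mul_pos hε0 hβ]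
    have heq : (α - c - β * ε) * ε + (α - c - θ * ε) ^ 2 / (4 * β) - (α - c) ^ 2 / (4 * β)
        = (4 * β * ((α - c - β * ε) * ε) + (α - c - θ * ε) ^ 2 - (α - c) ^ 2) / (4 * β) := by
      field_simp
    have := div_pos hnum (by positivity : (0:ℝ) < 4 * β)
    linarith [heq ▸ this]
  exact lt_of_le_of_lt hPAle (lt_of_lt_of_le hkey hPDge)
end
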